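/- arXiv:1504.06987 — 7 statements merged into one kernel-verified Lean document; each statement's English description precedes it below -/
import Mathlib

section
/- Let n be an odd positive integer and let X_1, …, X_n be independent real-valued random variables on a probability space. Suppose there are μ ∈ ℝ, ε > 0 and γ ∈ [0, 1/2) such that for every i, Pr[|X_i − μ| > ε] ≤ γ. Then the median of X_1, …, X_n satisfies Pr[|median(X_1,…,X_n) − μ| > ε] ≤ exp(−2n(1/2 − γ)²). -/
/-!
If the median lies outside the order-convex set `[μ - ε, μ + ε]`, then so do all the values on one
side of it in sorted order, so at least half of the `X i` are inaccurate. The indicators of these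
events are independent, `[0, 1]`-valued and of mean at most `γ`, so Hoeffding's inequality bounds
the probability that their sum reaches `n γ + n (1/2 - γ)` by `exp (-2 n (1/2 - γ)²)`.
-/

open Finset MeasureTheory ProbabilityTheory Real

theorem List.SortedLE.min_le_countP_notMem {α : Type*} [Preorder α] {l : List α}
    (hl : l.SortedLE) {S : Set α} [DecidablePred (· ∈ S)] (hS : Set.OrdConnected S) {k : ℕ}
    (hk : k < l.length) (hkS : l[k] ∉ S) :
    min (k + 1) (l.length - k) ≤ l.countP (· ∉ S) := by
  by_cases hlow : ∀ i (hik : i ≤ k), l[i]'(by omega) ∉ S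
  · calc min (k + 1) (l.length - k) ≤ k + 1 := min_le_left _ _
      _ = (l.take (k + 1)).countP (· ∉ S) := by
        rw [countP_eq_length.2, length_take]
        · omega
        intro a ha
        obtain ⟨i, hi, rfl⟩ := getElem_of_mem ha
        simp only [length_take, getElem_take] at hi ⊢
        simpa using hlow i (by omega)
      _ ≤ l.countP (· ∉ S) := (take_sublist _ _).countP_le
  · push Not at hlow
    obtain ⟨i, hik, hiS⟩ := hlow
    have hhigh : ∀ j (hkj : k ≤ j) (hj : j < l.length), l[j] ∉ S := fun j hkj hj hjS =>
      hkS (hS.out hiS hjS ⟨hl.monotone_get (show (⟨i, _⟩ : Fin l.length) ≤ ⟨k, hk⟩ from hik),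
        hl.monotone_get (show (⟨k, hk⟩ : Fin l.length) ≤ ⟨j, hj⟩ from hkj)⟩)
    calc min (k + 1) (l.length - k) ≤ l.length - k := min_le_right _ _
      _ = (l.drop k).countP (· ∉ S) := by
        rw [countP_eq_length.2, length_drop]
        intro a ha
        obtain ⟨j, hj, rfl⟩ := getElem_of_mem ha
        simp only [length_drop, getElem_drop] at hj ⊢
        simpa using hhigh (k + j) (by omega) (by omega)
      _ ≤ l.countP (· ∉ S) := (drop_sublist _ _).countP_le

/-- The lower median; `d` is returned for the empty multiset. -/
def Multiset.median {α : Type*} [LinearOrder α] (s : Multiset α) (d : α) : α :=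
  (s.sort (· ≤ ·)).getD ((card s - 1) / 2) d

theorem Multiset.card_le_two_mul_countP_notMem_of_median_notMem {α : Type*} [LinearOrder α]
    {s : Multiset α} {S : Set α} [DecidablePred (· ∈ S)] (hS : Set.OrdConnected S) {d : α}
    (h : s.median d ∉ S) : card s ≤ 2 * s.countP (· ∉ S) := by
  have hlen : (s.sort (· ≤ ·)).length = card s := length_sort _
  have hcountP : (s.sort (· ≤ ·)).countP (· ∉ S) = s.countP (· ∉ S) := by
    rw [← coe_countP, sort_eq]
  rcases Nat.eq_zero_or_pos (card s) with h0 | hpos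
  · omega
  have hk : (card s - 1) / 2 < (s.sort (· ≤ ·)).length := by omega
  rw [median, List.getD_eq_getElem _ _ hk] at h
  have hmin := (pairwise_sort s _).sortedLE.min_le_countP_notMem hS hk h
  omega

section

variable {Ω ι : Type*} [MeasurableSpace Ω] {P : Measure Ω} [Fintype ι]

theorem measureReal_sum_ge_le_of_iIndepFun_of_mem_unitInterval {Y : ι → Ω → ℝ}
    (hindep : iIndepFun Y P) (hmeas : ∀ i, AEMeasurable (Y i) P)
    (hY : ∀ i, ∀ᵐ ω ∂P, Y i ω ∈ Set.Icc (0 : ℝ) 1) {γ : ℝ} (hmean : ∀ i, P[Y i] ≤ γ)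
    {t : ℝ} (ht : 0 ≤ t) :
    P.real {ω | Fintype.card ι * γ + t ≤ ∑ i, Y i ω} ≤ exp (-2 * t ^ 2 / Fintype.card ι) := by
  have := hindep.isProbabilityMeasure
  have hsubG : ∀ i, HasSubgaussianMGF (fun ω ↦ Y i ω - P[Y i]) (1 / 4) P := by
    intro i
    convert hasSubgaussianMGF_of_mem_Icc (hmeas i) (hY i)
    norm_num
  have hcentered := hindep.comp (fun i x ↦ x - P[Y i]) (fun _ ↦ measurable_sub_const _)
  calc P.real {ω | Fintype.card ι * γ + t ≤ ∑ i, Y i ω}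
      ≤ P.real {ω | t ≤ ∑ i, (Y i ω - P[Y i])} := by
        refine measureReal_mono (fun ω hω ↦ ?_)
        have : ∑ i, P[Y i] ≤ Fintype.card ι * γ := by
          simpa using Finset.sum_le_sum fun i (_ : i ∈ Finset.univ) ↦ hmean i
        simp only [Set.mem_ofPred_eq, Finset.sum_sub_distrib] at hω ⊢
        linarith
    _ ≤ exp (-t ^ 2 / (2 * ((∑ _i : ι, (1 / 4 : NNReal) : NNReal) : ℝ))) :=
        HasSubgaussianMGF.measure_sum_ge_le_of_iIndepFun hcentered (fun i _ ↦ hsubG i) ht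
    _ = exp (-2 * t ^ 2 / Fintype.card ι) := by
        congr 1
        simp only [Finset.sum_const, card_univ, nsmul_eq_mul]
        push_cast
        ring

theorem measureReal_card_mem_ge_le_of_iIndepFun {β : Type*} [MeasurableSpace β]
    {X : ι → Ω → β} (hindep : iIndepFun X P) (hmeas : ∀ i, Measurable (X i)) {B : Set β}
    [DecidablePred (· ∈ B)] (hB : MeasurableSet B) {γ : ℝ} (hprob : ∀ i, P.real (X i ⁻¹' B) ≤ γ)
    {t : ℝ} (ht : 0 ≤ t) :
    P.real {ω | Fintype.card ι * γ + t ≤ #{i | X i ω ∈ B}} ≤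
      exp (-2 * t ^ 2 / Fintype.card ι) := by
  have hind : Measurable (B.indicator (1 : β → ℝ)) := measurable_one.indicator hB
  have hcount : ∀ ω, ∑ i, B.indicator 1 (X i ω) = (#{i | X i ω ∈ B} : ℝ) := fun ω ↦ by
    simp [Set.indicator_apply, Finset.sum_boole]
  simp_rw [← hcount]
  refine measureReal_sum_ge_le_of_iIndepFun_of_mem_unitInterval
    (hindep.comp (fun _ ↦ B.indicator 1) fun _ ↦ hind) (fun i ↦ (hind.comp (hmeas i)).aemeasurable)
    (fun i ↦ ae_of_all _ fun ω ↦ ?_) (fun i ↦ ?_) ht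
  · by_cases h : X i ω ∈ B <;> simp [h]
  · have : (B.indicator 1 ∘ X i : Ω → ℝ) = (X i ⁻¹' B).indicator 1 :=
      funext fun ω ↦ (Set.indicator_comp_right (X i)).symm
    rw [this, integral_indicator_one (hmeas i hB)]
    exact hprob i

end

theorem median_powering_lemma_general {Ω : Type*} [MeasureSpace Ω]
    [IsProbabilityMeasure (ℙ : Measure Ω)]
    (n : ℕ)
    (X : Fin n → Ω → ℝ) (hXmeas : ∀ i, Measurable (X i))
    (hindep : iIndepFun (m := fun _ => Real.measurableSpace) X ℙ)
    (μ ε γ : ℝ) (hγ0 : 0 ≤ γ) (hγ : γ < 1 / 2)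
    (hacc : ∀ i, (ℙ : Measure Ω) {ω | ε < |X i ω - μ|} ≤ ENNReal.ofReal γ)
    (median : Ω → ℝ)
    (hmedian : ∀ ω, median ω =
      (Multiset.sort (Multiset.map (fun i => X i ω) Finset.univ.val) (· ≤ ·)).getD
        ((n - 1) / 2) 0) :
    (ℙ : Measure Ω) {ω | ε < |median ω - μ|} ≤
      ENNReal.ofReal (Real.exp (-2 * n * (1 / 2 - γ) ^ 2)) := by
  set S := Set.Icc (μ - ε) (μ + ε)
  have hbad : ∀ x, ε < |x - μ| ↔ x ∈ Sᶜ := fun x ↦ by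
    rw [Set.mem_compl_iff, ← Set.mem_Icc_iff_abs_le, abs_sub_comm, not_le]
  have hsub : {ω | ε < |median ω - μ|} ⊆
      {ω | n * γ + n * (1 / 2 - γ) ≤ #{i | X i ω ∈ Sᶜ}} := by
    intro ω hω
    have hmed : median ω = (univ.val.map (X · ω)).median 0 := by
      simp [hmedian, Multiset.median]
    have hcount := Multiset.card_le_two_mul_countP_notMem_of_median_notMem
      Set.ordConnected_Icc (hmed ▸ (hbad _).1 hω)
    simp only [Multiset.card_map, card_val, card_univ, Fintype.card_fin,
      Multiset.countP_map] at hcount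
    have hhalf : (n : ℝ) ≤ 2 * #{i | X i ω ∈ Sᶜ} := by exact_mod_cast hcount
    simp only [Set.mem_ofPred_eq]
    linarith
  have hprob : ∀ i, (ℙ : Measure Ω).real (X i ⁻¹' Sᶜ) ≤ γ := fun i ↦
    ENNReal.toReal_le_of_le_ofReal hγ0 (by simpa [Set.preimage, hbad] using hacc i)
  have hoeff := measureReal_card_mem_ge_le_of_iIndepFun hindep hXmeas
    measurableSet_Icc.compl hprob (t := n * (1 / 2 - γ)) (mul_nonneg n.cast_nonneg (by linarith))
  rw [Fintype.card_fin] at hoeff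
  refine (measure_mono hsub).trans <| (ENNReal.le_ofReal_iff_toReal_le (measure_ne_top _ _)
    (exp_pos _).le).2 (hoeff.trans_eq ?_)
  rcases eq_or_ne n 0 with rfl | hn
  · simp
  · field_simp

theorem median_powering_lemma {Ω : Type*} [MeasureSpace Ω]
    [IsProbabilityMeasure (ℙ : Measure Ω)]
    (n : ℕ) (hodd : Odd n) (hpos : 0 < n)
    (X : Fin n → Ω → ℝ) (hXmeas : ∀ i, Measurable (X i))
    (hindep : iIndepFun (m := fun _ => Real.measurableSpace) X ℙ)
    (μ ε γ : ℝ) (hε : 0 < ε) (hγ0 : 0 ≤ γ) (hγ : γ < 1 / 2)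
    (hacc : ∀ i, (ℙ : Measure Ω) {ω | ε < |X i ω - μ|} ≤ ENNReal.ofReal γ)
    (median : Ω → ℝ)
    (hmedian : ∀ ω, median ω =
      (Multiset.sort (Multiset.map (fun i => X i ω) Finset.univ.val) (· ≤ ·)).getD
        ((n - 1) / 2) 0) :
    (ℙ : Measure Ω) {ω | ε < |median ω - μ|} ≤
      ENNReal.ofReal (Real.exp (-2 * n * (1 / 2 - γ) ^ 2)) :=
  median_powering_lemma_general n X hXmeas hindep μ ε γ hγ0 hγ hacc median hmedian
end

section
/- For all real numbers x, y ∈ [0, 1], |arcsin x − arcsin y| ≤ (π/2)·√(|x² − y²|). -/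
/-!
Put `θ = arcsin x - arcsin y`. For `x, y ≥ 0` both arcsines lie in `[0, π/2]`, so `|θ| ≤ π/2`
and Jordan's inequality gives `|θ| ≤ (π/2) |sin θ|`. By the subtraction formula
`sin θ = a - b` with `a = x √(1 - y²)` and `b = y √(1 - x²)`, two nonnegative numbers with
`a² - b² = x² - y²`, and `|a - b| ≤ √|a² - b²|` finishes the proof.
-/

open Real Set

theorem abs_sub_le_sqrt_abs_sq_sub {a b : ℝ} (ha : 0 ≤ a) (hb : 0 ≤ b) :
    |a - b| ≤ √|a ^ 2 - b ^ 2| := by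
  have h : |a - b| ≤ |a + b| :=
    (abs_sub_le_iff.2 ⟨by linarith, by linarith⟩).trans (le_abs_self _)
  rw [Real.le_sqrt (abs_nonneg _) (abs_nonneg _), sq_sub_sq, abs_mul, sq]
  exact mul_le_mul_of_nonneg_right h (abs_nonneg _)

theorem abs_le_pi_div_two_mul_abs_sin {θ : ℝ} (hθ : |θ| ≤ π / 2) :
    |θ| ≤ π / 2 * |sin θ| := by
  have h := mul_abs_le_abs_sin hθ
  rw [div_mul_eq_mul_div, div_le_iff₀ pi_pos] at h
  linarith

theorem sin_arcsin_sub_arcsin {x y : ℝ} (hx : x ∈ Icc (-1) 1) (hy : y ∈ Icc (-1) 1) :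
    sin (arcsin x - arcsin y) = x * √(1 - y ^ 2) - y * √(1 - x ^ 2) := by
  rw [sin_sub, sin_arcsin' hx, sin_arcsin' hy, cos_arcsin, cos_arcsin]
  ring

theorem abs_arcsin_sub_arcsin_le {x y : ℝ} (hx : 0 ≤ x) (hy : 0 ≤ y) :
    |arcsin x - arcsin y| ≤ π / 2 :=
  abs_sub_le_iff.2
    ⟨by linarith [arcsin_le_pi_div_two x, arcsin_nonneg.2 hy],
      by linarith [arcsin_le_pi_div_two y, arcsin_nonneg.2 hx]⟩

theorem arcsin_diff_le (x y : ℝ) (hx : x ∈ Set.Icc (0:ℝ) 1) (hy : y ∈ Set.Icc (0:ℝ) 1) :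
    |Real.arcsin x - Real.arcsin y| ≤ (Real.pi / 2) * Real.sqrt |x ^ 2 - y ^ 2| := by
  obtain ⟨hx0, hx1⟩ := hx
  obtain ⟨hy0, hy1⟩ := hy
  have hsq : (x * √(1 - y ^ 2)) ^ 2 - (y * √(1 - x ^ 2)) ^ 2 = x ^ 2 - y ^ 2 := by
    rw [mul_pow, mul_pow, sq_sqrt (by nlinarith), sq_sqrt (by nlinarith)]
    ring
  calc |arcsin x - arcsin y|
      ≤ π / 2 * |sin (arcsin x - arcsin y)| :=
        abs_le_pi_div_two_mul_abs_sin (abs_arcsin_sub_arcsin_le hx0 hy0)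
    _ = π / 2 * |x * √(1 - y ^ 2) - y * √(1 - x ^ 2)| := by
        rw [sin_arcsin_sub_arcsin ⟨by linarith, hx1⟩ ⟨by linarith, hy1⟩]
    _ ≤ π / 2 * √|x ^ 2 - y ^ 2| := by
        rw [← hsq]
        gcongr
        exact abs_sub_le_sqrt_abs_sq_sub (by positivity) (by positivity)
end

section
/- Let f(p, q) = (p − q)/(p + q) for reals p, q. Suppose 0 ≤ p ≤ 1, 0 ≤ q ≤ 1, p + q > 0, and let p̃, q̃ ≥ 0 satisfy |p − p̃| ≤ η(p + q) and |q − q̃| ≤ η(p + q) for some η with 0 ≤ η ≤ 1/5. Then |f(p, q) − f(p̃, q̃)| ≤ 5η. -/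
/-!
Writing `s = p + q` and `s̃ = p̃ + q̃`, the difference of the two ratios is
`2 (p q̃ - q p̃) / (s s̃)`. The numerator is `p (q̃ - q) - q (p̃ - p)`, so it is at most `2 ε s`
when both perturbations are at most `ε`, while `s̃ ≥ s - 2ε`. Hence the difference is at most
`2ε / (s - 2ε)`, which for `ε = η s` is `2η / (1 - 2η) ≤ 5η` as soon as `η ≤ 3/10`.
-/

lemma sub_div_add_sub_sub_div_add {p q p' q' : ℝ} (h : p + q ≠ 0) (h' : p' + q' ≠ 0) :
    (p - q) / (p + q) - (p' - q') / (p' + q') = 2 * (p * q' - q * p') / ((p + q) * (p' + q')) := by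
  field_simp
  ring

lemma abs_mul_sub_mul_le_of_abs_sub_le {p q p' q' ε : ℝ} (hp : 0 ≤ p) (hq : 0 ≤ q)
    (hpε : |p - p'| ≤ ε) (hqε : |q - q'| ≤ ε) : |p * q' - q * p'| ≤ (p + q) * ε :=
  calc |p * q' - q * p'| = |q * (p - p') - p * (q - q')| := by ring_nf
    _ ≤ |q * (p - p')| + |p * (q - q')| := abs_sub _ _
    _ = q * |p - p'| + p * |q - q'| := by rw [abs_mul, abs_mul, abs_of_nonneg hp, abs_of_nonneg hq]
    _ ≤ q * ε + p * ε := by gcongr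
    _ = (p + q) * ε := by ring

lemma abs_sub_div_add_sub_sub_div_add_le {p q p' q' ε : ℝ} (hp : 0 ≤ p) (hq : 0 ≤ q)
    (hε : 2 * ε < p + q) (hpε : |p - p'| ≤ ε) (hqε : |q - q'| ≤ ε) :
    |(p - q) / (p + q) - (p' - q') / (p' + q')| ≤ 2 * ε / (p + q - 2 * ε) := by
  have hε0 : 0 ≤ ε := (abs_nonneg _).trans hpε
  have hs : 0 < p + q := by linarith
  have hs' : p + q - 2 * ε ≤ p' + q' := by
    linarith [(abs_le.mp hpε).2, (abs_le.mp hqε).2]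
  have hgap : 0 < p + q - 2 * ε := by linarith
  have hs'pos : 0 < p' + q' := hgap.trans_le hs'
  rw [sub_div_add_sub_sub_div_add hs.ne' hs'pos.ne', abs_div, abs_mul 2,
    abs_of_pos (mul_pos hs hs'pos), abs_two]
  calc 2 * |p * q' - q * p'| / ((p + q) * (p' + q'))
      ≤ 2 * ((p + q) * ε) / ((p + q) * (p + q - 2 * ε)) := by
        gcongr 2 * ?_ / ((p + q) * ?_)
        exact abs_mul_sub_mul_le_of_abs_sub_le hp hq hpε hqε
    _ = 2 * ε / (p + q - 2 * ε) := by rw [mul_left_comm, mul_div_mul_left _ _ hs.ne']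

theorem ratio_stability_general (p q ptilde qtilde η : ℝ)
    (hp0 : 0 ≤ p) (hq0 : 0 ≤ q) (hpq : 0 < p + q)
    (hη0 : 0 ≤ η) (hη : η ≤ 1 / 5)
    (hpertp : |p - ptilde| ≤ η * (p + q)) (hpertq : |q - qtilde| ≤ η * (p + q)) :
    |(p - q) / (p + q) - (ptilde - qtilde) / (ptilde + qtilde)| ≤ 5 * η := by
  have hgap : 0 < 1 - 2 * η := by linarith
  have hε : 2 * (η * (p + q)) < p + q := by nlinarith
  calc _ ≤ 2 * (η * (p + q)) / (p + q - 2 * (η * (p + q))) :=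
        abs_sub_div_add_sub_sub_div_add_le hp0 hq0 hε hpertp hpertq
    _ = 2 * η / (1 - 2 * η) := by field_simp
    _ ≤ 5 * η := by
        rw [div_le_iff₀ hgap]
        nlinarith

theorem ratio_stability (p q ptilde qtilde η : ℝ)
    (hp0 : 0 ≤ p) (hp1 : p ≤ 1) (hq0 : 0 ≤ q) (hq1 : q ≤ 1) (hpq : 0 < p + q)
    (hpt : 0 ≤ ptilde) (hqt : 0 ≤ qtilde)
    (hη0 : 0 ≤ η) (hη : η ≤ 1 / 5)
    (hpertp : |p - ptilde| ≤ η * (p + q)) (hpertq : |q - qtilde| ≤ η * (p + q)) :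
    |(p - q) / (p + q) - (ptilde - qtilde) / (ptilde + qtilde)| ≤ 5 * η :=
  ratio_stability_general p q ptilde qtilde η hp0 hq0 hpq hη0 hη hpertp hpertq
end

section
/- Let Ω be a finite nonempty set and let ν, π be probability distributions on Ω (nonnegative functions summing to 1) with π(x) > 0 for all x ∈ Ω. Then Σ_{x∈Ω} √(ν(x)·π(x)) ≥ 1/√(χ²(ν, π) + 1); equivalently, (Σ_{x∈Ω} √(ν(x)π(x)))² · (Σ_{x∈Ω} ν(x)²/π(x)) ≥ 1. -/
/-!
Writing `ν = (√(ν π))^(2/3) (ν² / π)^(1/3)` pointwise, Hölder's inequality with exponents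
`3/2` and `3` gives `1 = ∑ ν ≤ (∑ √(ν π))^(2/3) (∑ ν² / π)^(1/3)`, which is the claim cubed.
Hölder for these exponents follows from two Cauchy–Schwarz inequalities through the
intermediate sequence `r² / f`, so no real powers are needed.
-/

namespace Finset

variable {ι R : Type*} [Field R] [LinearOrder R] [IsStrictOrderedRing R]

theorem sum_pow_three_le_sq_sum_mul_sum_of_pow_three_le_sq_mul (s : Finset ι) {r f g : ι → R}
    (hr : ∀ i ∈ s, 0 ≤ r i) (hf : ∀ i ∈ s, 0 ≤ f i) (hg : ∀ i ∈ s, 0 ≤ g i)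
    (ht : ∀ i ∈ s, r i ^ 3 ≤ f i ^ 2 * g i) :
    (∑ i ∈ s, r i) ^ 3 ≤ (∑ i ∈ s, f i) ^ 2 * ∑ i ∈ s, g i := by
  have hd : ∀ i ∈ s, 0 ≤ r i ^ 2 / f i := fun i hi => div_nonneg (sq_nonneg _) (hf i hi)
  have hrf : (∑ i ∈ s, r i) ^ 2 ≤ (∑ i ∈ s, f i) * ∑ i ∈ s, r i ^ 2 / f i := by
    refine sum_sq_le_sum_mul_sum_of_sq_le_mul s hf hd fun i hi => ?_
    rcases (hf i hi).eq_or_lt with hfi | hfi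
    · have hr3 : r i ^ 3 ≤ 0 := by simpa [← hfi] using ht i hi
      have hri : r i = 0 :=
        pow_eq_zero_iff three_ne_zero |>.1 (hr3.antisymm (pow_nonneg (hr i hi) 3))
      simp [hri]
    · rw [mul_div_cancel₀ _ hfi.ne']
  have hdg : (∑ i ∈ s, r i ^ 2 / f i) ^ 2 ≤ (∑ i ∈ s, r i) * ∑ i ∈ s, g i := by
    refine sum_sq_le_sum_mul_sum_of_sq_le_mul s hr hg fun i hi => ?_
    rcases (hf i hi).eq_or_lt with hfi | hfi
    · simp [← hfi, mul_nonneg (hr i hi) (hg i hi)]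
    · rw [div_pow, div_le_iff₀ (by positivity)]
      nlinarith [mul_le_mul_of_nonneg_left (ht i hi) (hr i hi)]
  have hR : 0 ≤ ∑ i ∈ s, r i := sum_nonneg hr
  have hD : 0 ≤ ∑ i ∈ s, r i ^ 2 / f i := sum_nonneg hd
  have hfourth : (∑ i ∈ s, r i) * (∑ i ∈ s, r i) ^ 3 ≤
      (∑ i ∈ s, r i) * ((∑ i ∈ s, f i) ^ 2 * ∑ i ∈ s, g i) :=
    calc (∑ i ∈ s, r i) * (∑ i ∈ s, r i) ^ 3 = ((∑ i ∈ s, r i) ^ 2) ^ 2 := by ring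
      _ ≤ ((∑ i ∈ s, f i) * ∑ i ∈ s, r i ^ 2 / f i) ^ 2 := by gcongr
      _ = (∑ i ∈ s, f i) ^ 2 * (∑ i ∈ s, r i ^ 2 / f i) ^ 2 := by ring
      _ ≤ (∑ i ∈ s, f i) ^ 2 * ((∑ i ∈ s, r i) * ∑ i ∈ s, g i) := by gcongr
      _ = _ := by ring
  rcases hR.eq_or_lt with hR0 | hRpos
  · rw [← hR0, zero_pow three_ne_zero]
    exact mul_nonneg (sq_nonneg _) (sum_nonneg hg)
  · exact le_of_mul_le_mul_left hfourth hRpos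

end Finset

open Finset

theorem one_div_sqrt_le_of_one_le_sq_mul {S C : ℝ} (hS : 0 ≤ S) (h : 1 ≤ S ^ 2 * C) :
    1 / Real.sqrt C ≤ S := by
  have hC : 0 < C := pos_of_mul_pos_right (one_pos.trans_le h) (sq_nonneg S)
  rw [div_le_iff₀ (Real.sqrt_pos.2 hC), ← Real.sqrt_sq hS, ← Real.sqrt_mul (sq_nonneg S)]
  exact Real.one_le_sqrt.2 h

theorem overlap_ge_inv_sqrt_chi_squared_general {Ω : Type*} [Fintype Ω]
    (ν π : Ω → ℝ) (hν0 : ∀ x, 0 ≤ ν x) (hπ0 : ∀ x, 0 < π x)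
    (hνsum : ∑ x : Ω, ν x = 1) :
    1 / Real.sqrt ((∑ x : Ω, (ν x) ^ 2 / π x - 1) + 1) ≤
        ∑ x : Ω, Real.sqrt (ν x * π x) ∧
      1 ≤ (∑ x : Ω, Real.sqrt (ν x * π x)) ^ 2 * (∑ x : Ω, (ν x) ^ 2 / π x) := by
  have hHolder :
      1 ≤ (∑ x : Ω, Real.sqrt (ν x * π x)) ^ 2 * (∑ x : Ω, (ν x) ^ 2 / π x) := by
    have := sum_pow_three_le_sq_sum_mul_sum_of_pow_three_le_sq_mul univ
      (r := ν) (f := fun x => Real.sqrt (ν x * π x)) (g := fun x => ν x ^ 2 / π x)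
      (fun x _ => hν0 x) (fun x _ => Real.sqrt_nonneg _)
      (fun x _ => div_nonneg (sq_nonneg _) (hπ0 x).le) fun x _ => by
        rw [Real.sq_sqrt (mul_nonneg (hν0 x) (hπ0 x).le)]
        exact (by field_simp [(hπ0 x).ne'] : ν x ^ 3 = ν x * π x * (ν x ^ 2 / π x)).le
    simpa [hνsum] using this
  refine ⟨?_, hHolder⟩
  rw [sub_add_cancel]
  exact one_div_sqrt_le_of_one_le_sq_mul (sum_nonneg fun x _ => Real.sqrt_nonneg _) hHolder

theorem overlap_ge_inv_sqrt_chi_squared {Ω : Type*} [Fintype Ω] [Nonempty Ω]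
    (ν π : Ω → ℝ) (hν0 : ∀ x, 0 ≤ ν x) (hπ0 : ∀ x, 0 < π x)
    (hνsum : ∑ x : Ω, ν x = 1) (hπsum : ∑ x : Ω, π x = 1) :
    1 / Real.sqrt ((∑ x : Ω, (ν x) ^ 2 / π x - 1) + 1) ≤
        ∑ x : Ω, Real.sqrt (ν x * π x) ∧
      1 ≤ (∑ x : Ω, Real.sqrt (ν x * π x)) ^ 2 * (∑ x : Ω, (ν x) ^ 2 / π x) :=
  overlap_ge_inv_sqrt_chi_squared_general ν π hν0 hπ0 hνsum
end

section
/- Let Ω be a finite nonempty set and H : Ω → ℝ. For β ∈ ℝ, the partition function is Z(β) = Σ_{x∈Ω} exp(−β·H(x)) (note Z(β) > 0), and the Gibbs distribution π_β on Ω is defined by π_β(x) = exp(−β·H(x))/Z(β). Suppose β, β′ ∈ ℝ and B ≥ 1 satisfy the Chebyshev cooling schedule condition Z(2β′ − β)·Z(β)/Z(β′)² ≤ B. Then (Σ_{x∈Ω} √(π_β(x)·π_{β′}(x)))² ≥ 1/B. -/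
/-!
Writing `Z` for the partition function, the overlap equals `Z((β + β')/2)² / (Z β · Z β')`,
because `√(e^{-βH} e^{-β'H}) = e^{-(β+β')H/2}`. By Cauchy–Schwarz `Z` is midpoint log-convex, and
two applications on the equally spaced points `β, (β+β')/2, β', (3β'-β)/2, 2β'-β` give
`Z β'³ ≤ Z((β+β')/2)² · Z(2β'-β)`. Multiplying by `Z β`, the overlap is at least
`Z β'² / (Z(2β'-β) · Z β)`, the reciprocal of the Chebyshev ratio.
-/

open Finset Real

namespace GibbsOverlap

variable {Ω : Type*} [Fintype Ω] (H : Ω → ℝ)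

noncomputable def partitionFunction (β : ℝ) : ℝ :=
  ∑ x : Ω, exp (-β * H x)

noncomputable def gibbs (β : ℝ) (x : Ω) : ℝ :=
  exp (-β * H x) / partitionFunction H β

local notation "Z" => partitionFunction H

theorem partitionFunction_pos [Nonempty Ω] (β : ℝ) : 0 < Z β :=
  sum_pos (fun _ _ => exp_pos _) univ_nonempty

theorem partitionFunction_sq_le_mul {a b c : ℝ} (habc : a + b = 2 * c) :
    Z c ^ 2 ≤ Z a * Z b := by
  obtain rfl : c = a / 2 + b / 2 := by linarith
  have hexp_sq (t : ℝ) (x : Ω) : exp (-(t / 2) * H x) ^ 2 = exp (-t * H x) := by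
    rw [← exp_nat_mul]; ring_nf
  calc Z (a / 2 + b / 2) ^ 2
      = (∑ x, exp (-(a / 2) * H x) * exp (-(b / 2) * H x)) ^ 2 := by
        simp only [partitionFunction, ← exp_add]; ring_nf
    _ ≤ (∑ x, exp (-(a / 2) * H x) ^ 2) * ∑ x, exp (-(b / 2) * H x) ^ 2 :=
        sum_mul_sq_le_sq_mul_sq _ _ _
    _ = Z a * Z b := by simp only [hexp_sq, partitionFunction]

theorem partitionFunction_pow_three_le [Nonempty Ω] (β β' : ℝ) :
    Z β' ^ 3 ≤ Z ((β + β') / 2) ^ 2 * Z (2 * β' - β) := by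
  have h₁ : Z β' ^ 2 ≤ Z ((β + β') / 2) * Z ((3 * β' - β) / 2) :=
    partitionFunction_sq_le_mul H (by ring)
  have h₂ : Z ((3 * β' - β) / 2) ^ 2 ≤ Z β' * Z (2 * β' - β) :=
    partitionFunction_sq_le_mul H (by ring)
  have hpos := partitionFunction_pos H β'
  have h₄ : Z β' * Z β' ^ 3 ≤ Z β' * (Z ((β + β') / 2) ^ 2 * Z (2 * β' - β)) :=
    calc Z β' * Z β' ^ 3 = (Z β' ^ 2) ^ 2 := by ring
      _ ≤ (Z ((β + β') / 2) * Z ((3 * β' - β) / 2)) ^ 2 := by gcongr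
      _ = Z ((β + β') / 2) ^ 2 * Z ((3 * β' - β) / 2) ^ 2 := by ring
      _ ≤ Z ((β + β') / 2) ^ 2 * (Z β' * Z (2 * β' - β)) := by gcongr
      _ = Z β' * (Z ((β + β') / 2) ^ 2 * Z (2 * β' - β)) := by ring
  exact le_of_mul_le_mul_left h₄ hpos

theorem sum_sqrt_gibbs_mul_gibbs [Nonempty Ω] (β β' : ℝ) :
    ∑ x, √(gibbs H β x * gibbs H β' x) = Z ((β + β') / 2) / √(Z β * Z β') := by
  have hZ : 0 < Z β * Z β' := mul_pos (partitionFunction_pos H β) (partitionFunction_pos H β')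
  rw [partitionFunction, sum_div]
  refine sum_congr rfl fun x _ => ?_
  rw [gibbs, gibbs, div_mul_div_comm, sqrt_div' _ hZ.le, ← exp_add, ← exp_half]
  ring_nf

theorem partitionFunction_sq_div_le_sum_sqrt_gibbs_sq [Nonempty Ω] (β β' : ℝ) :
    Z β' ^ 2 / (Z (2 * β' - β) * Z β) ≤ (∑ x, √(gibbs H β x * gibbs H β' x)) ^ 2 := by
  have hpos := partitionFunction_pos H
  rw [sum_sqrt_gibbs_mul_gibbs, div_pow, sq_sqrt (mul_pos (hpos β) (hpos β')).le,
    div_le_div_iff₀ (mul_pos (hpos _) (hpos β)) (mul_pos (hpos β) (hpos β'))]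
  linear_combination mul_le_mul_of_nonneg_left (partitionFunction_pow_three_le H β β') (hpos β).le

end GibbsOverlap

open GibbsOverlap in
theorem gibbs_overlap_of_chebyshev_general {Ω : Type*} [Fintype Ω] [Nonempty Ω]
    (H : Ω → ℝ) (β β' B : ℝ)
    (hcheb : (∑ x : Ω, Real.exp (-(2 * β' - β) * H x)) * (∑ x : Ω, Real.exp (-β * H x)) /
        (∑ x : Ω, Real.exp (-β' * H x)) ^ 2 ≤ B) :
    1 / B ≤ (∑ x : Ω, Real.sqrt ((Real.exp (-β * H x) / ∑ y : Ω, Real.exp (-β * H y)) *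
        (Real.exp (-β' * H x) / ∑ y : Ω, Real.exp (-β' * H y)))) ^ 2 := by
  have hpos := partitionFunction_pos H
  have hratio : 0 < partitionFunction H (2 * β' - β) * partitionFunction H β /
      partitionFunction H β' ^ 2 :=
    div_pos (mul_pos (hpos _) (hpos β)) (pow_pos (hpos β') 2)
  calc 1 / B ≤ 1 / (partitionFunction H (2 * β' - β) * partitionFunction H β /
        partitionFunction H β' ^ 2) := one_div_le_one_div_of_le hratio hcheb
    _ = partitionFunction H β' ^ 2 / (partitionFunction H (2 * β' - β) * partitionFunction H β) :=
        one_div_div _ _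
    _ ≤ _ := partitionFunction_sq_div_le_sum_sqrt_gibbs_sq H β β'

theorem gibbs_overlap_of_chebyshev {Ω : Type*} [Fintype Ω] [Nonempty Ω]
    (H : Ω → ℝ) (β β' B : ℝ) (hB : 1 ≤ B)
    (hcheb : (∑ x : Ω, Real.exp (-(2 * β' - β) * H x)) * (∑ x : Ω, Real.exp (-β * H x)) /
        (∑ x : Ω, Real.exp (-β' * H x)) ^ 2 ≤ B) :
    1 / B ≤ (∑ x : Ω, Real.sqrt ((Real.exp (-β * H x) / ∑ y : Ω, Real.exp (-β * H y)) *
        (Real.exp (-β' * H x) / ∑ y : Ω, Real.exp (-β' * H y)))) ^ 2 :=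
  gibbs_overlap_of_chebyshev_general H β β' B hcheb
end

section
/- Let B ≥ 1, ℓ ≥ 1 be given, let 0 < ε ≤ 1, and set m = ⌈16Bℓ/ε²⌉. Let (Y_{i,j}) for i ∈ {0, …, ℓ−1}, j ∈ {1, …, m} be mutually independent nonnegative square-integrable random variables on a probability space such that for each i, all Y_{i,j} (j = 1, …, m) have the same mean μ_i > 0 and satisfy E[Y_{i,j}²] ≤ B·μ_i². Define α̃_i = (1/m)·Σ_{j=1}^m Y_{i,j}, Ỹ = α̃_0·α̃_1⋯α̃_{ℓ−1}, and Ȳ = μ_0·μ_1⋯μ_{ℓ−1}. Then Pr[(1 − ε)Ȳ ≤ Ỹ ≤ (1 + ε)Ȳ] ≥ 3/4. -/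
/-!
Each empirical mean `α̃ᵢ` has mean `μᵢ` and, since its `m` samples are pairwise independent,
relative second moment `E[α̃ᵢ²] / μᵢ² ≤ 1 + (B - 1) / m`. The `α̃ᵢ` are independent, so the relative
second moment of `Ỹ = ∏ α̃ᵢ` is the product of theirs, at most
`(1 + (B - 1) / m) ^ ℓ ≤ 1 + 2ℓ(B - 1) / m ≤ 1 + ε² / 8` by the choice of `m`. Hence
`Var Ỹ ≤ ε² Ȳ² / 8`, and Chebyshev's inequality bounds `Pr[|Ỹ - Ȳ| ≥ ε Ȳ]` by `1 / 8`.
-/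

open MeasureTheory ProbabilityTheory Finset

lemma one_add_pow_le_one_add_two_mul {x : ℝ} (hx : 0 ≤ x) {n : ℕ} (hnx : n * x ≤ 1) :
    (1 + x) ^ n ≤ 1 + 2 * (n * x) := by
  have hexp : Real.exp (n * x) - 1 ≤ 2 * (n * x) := by
    have hnx0 : 0 ≤ n * x := by positivity
    have := Real.abs_exp_sub_one_le (x := n * x) (by rwa [abs_of_nonneg hnx0])
    rw [abs_of_nonneg hnx0] at this
    exact (le_abs_self _).trans this
  calc (1 + x) ^ n ≤ Real.exp x ^ n := by gcongr; linarith [Real.add_one_le_exp x]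
    _ = Real.exp (n * x) := (Real.exp_nat_mul x n).symm
    _ ≤ 1 + 2 * (n * x) := by linarith

namespace ProbabilityTheory

variable {Ω : Type*} {mΩ : MeasurableSpace Ω} {P : Measure Ω}

lemma iIndepFun.curry {ι κ 𝓧 : Type*} [MeasurableSpace 𝓧]
    {X : ι × κ → Ω → 𝓧} (mX : ∀ p, Measurable (X p)) (hX : iIndepFun X P) :
    iIndepFun (fun i ω j ↦ X (i, j) ω) P := by
  have := hX.isProbabilityMeasure
  have (p : ι × κ) : IsProbabilityMeasure (P.map (X p)) :=
    Measure.isProbabilityMeasure_map (mX p).aemeasurable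
  have hrow : ∀ i, P.map (fun ω j ↦ X (i, j) ω) = Measure.infinitePi fun j ↦ P.map (X (i, j)) :=
    fun i ↦ (iIndepFun_iff_map_fun_eq_infinitePi_map fun j ↦ mX (i, j)).1
      (hX.precomp (Prod.mk_right_injective i))
  rw [iIndepFun_iff_map_fun_eq_infinitePi_map (fun i ↦ measurable_pi_lambda _ fun j ↦ mX (i, j)),
    funext hrow, ← Measure.infinitePi_map_curry fun i j ↦ P.map (X (i, j)),
    ← (iIndepFun_iff_map_fun_eq_infinitePi_map mX).1 hX,
    Measure.map_map (by fun_prop) (measurable_pi_lambda _ mX)]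
  rfl

lemma ofReal_one_sub_variance_div_sq_le_meas_lt [IsProbabilityMeasure P] {X : Ω → ℝ}
    (hX : MemLp X 2 P) {c : ℝ} (hc : 0 < c) :
    ENNReal.ofReal (1 - variance X P / c ^ 2) ≤ P {ω | |X ω - ∫ ω', X ω' ∂P| < c} := by
  have hcover : (1 : ENNReal) ≤
      P {ω | |X ω - ∫ ω', X ω' ∂P| < c} + P {ω | c ≤ |X ω - ∫ ω', X ω' ∂P|} := by
    rw [← measure_univ (μ := P)]
    refine (measure_mono fun ω _ ↦ ?_).trans (measure_union_le _ _)
    exact (lt_or_ge _ c).imp id id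
  rw [ENNReal.ofReal_sub _ (div_nonneg (variance_nonneg X P) (sq_nonneg c)), ENNReal.ofReal_one,
    tsub_le_iff_right]
  exact hcover.trans (add_le_add le_rfl (meas_ge_le_variance_div_sq hX hc))

section Product

variable {ι : Type*} [Fintype ι] {X : ι → Ω → ℝ}

lemma iIndepFun.integrable_fun_prod (hX : iIndepFun X P) (mX : ∀ i, Measurable (X i))
    (hint : ∀ i, Integrable (X i) P) :
    Integrable (fun ω ↦ ∏ i, X i ω) P := by
  have := hX.isProbabilityMeasure
  have hprod : Integrable (fun x : ι → ℝ ↦ ∏ i, x i) (P.map fun ω i ↦ X i ω) := by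
    rw [hX.map_fun_eq_pi_map fun i ↦ (mX i).aemeasurable]
    exact Integrable.fintype_prod fun i ↦ (integrable_map_measure aestronglyMeasurable_id
      (mX i).aemeasurable).2 (hint i)
  exact (integrable_map_measure hprod.1 (measurable_pi_lambda _ mX).aemeasurable).1 hprod

lemma iIndepFun.memLp_fun_prod (hX : iIndepFun X P) (mX : ∀ i, Measurable (X i))
    (hX2 : ∀ i, MemLp (X i) 2 P) :
    MemLp (fun ω ↦ ∏ i, X i ω) 2 P := by
  refine (memLp_two_iff_integrable_sq (by fun_prop)).2 ?_
  simp_rw [← Finset.prod_pow]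
  exact (hX.comp (fun _ x ↦ x ^ 2) fun _ ↦ by fun_prop).integrable_fun_prod (by fun_prop)
    fun i ↦ (hX2 i).integrable_sq

lemma iIndepFun.integral_fun_prod_of_integral_eq (hX : iIndepFun X P)
    (mX : ∀ i, Measurable (X i)) {a : ι → ℝ} (hmean : ∀ i, ∫ ω, X i ω ∂P = a i) :
    ∫ ω, ∏ i, X i ω ∂P = ∏ i, a i :=
  (hX.integral_fun_prod_eq_prod_integral fun i ↦ (mX i).aestronglyMeasurable).trans
    (Finset.prod_congr rfl fun i _ ↦ hmean i)

lemma iIndepFun.integral_sq_fun_prod_le (hX : iIndepFun X P) (mX : ∀ i, Measurable (X i))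
    {c : ℝ} {a : ι → ℝ} (hsecond : ∀ i, ∫ ω, X i ω ^ 2 ∂P ≤ c * a i ^ 2) :
    ∫ ω, (∏ i, X i ω) ^ 2 ∂P ≤ c ^ Fintype.card ι * (∏ i, a i) ^ 2 := by
  simp_rw [← Finset.prod_pow]
  rw [hX.integral_fun_prod_comp (f := fun _ x ↦ x ^ 2) (fun i ↦ (mX i).aemeasurable)
    fun _ ↦ (continuous_pow 2).aestronglyMeasurable]
  calc ∏ i, ∫ ω, X i ω ^ 2 ∂P ≤ ∏ i, c * a i ^ 2 :=
        Finset.prod_le_prod (fun i _ ↦ integral_nonneg fun ω ↦ sq_nonneg _) fun i _ ↦ hsecond i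
    _ = c ^ Fintype.card ι * ∏ i, a i ^ 2 := by
        rw [Finset.prod_mul_distrib, Finset.prod_const, Finset.card_univ]

lemma iIndepFun.variance_fun_prod_le (hX : iIndepFun X P) (mX : ∀ i, Measurable (X i))
    (hX2 : ∀ i, MemLp (X i) 2 P) {c : ℝ} {a : ι → ℝ} (hmean : ∀ i, ∫ ω, X i ω ∂P = a i)
    (hsecond : ∀ i, ∫ ω, X i ω ^ 2 ∂P ≤ c * a i ^ 2) :
    variance (fun ω ↦ ∏ i, X i ω) P ≤ (c ^ Fintype.card ι - 1) * (∏ i, a i) ^ 2 := by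
  have := hX.isProbabilityMeasure
  rw [variance_eq_sub (hX.memLp_fun_prod mX hX2)]
  simp only [Pi.pow_apply, hX.integral_fun_prod_of_integral_eq mX hmean]
  linarith [hX.integral_sq_fun_prod_le mX hsecond]

lemma iIndepFun.ofReal_one_sub_le_meas_abs_fun_prod_sub_lt (hX : iIndepFun X P)
    (mX : ∀ i, Measurable (X i)) (hX2 : ∀ i, MemLp (X i) 2 P) {c : ℝ} {a : ι → ℝ}
    (ha : ∀ i, 0 < a i) (hmean : ∀ i, ∫ ω, X i ω ∂P = a i)
    (hsecond : ∀ i, ∫ ω, X i ω ^ 2 ∂P ≤ c * a i ^ 2) {ε : ℝ} (hε : 0 < ε) :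
    ENNReal.ofReal (1 - (c ^ Fintype.card ι - 1) / ε ^ 2) ≤
      P {ω | |∏ i, X i ω - ∏ i, a i| < ε * ∏ i, a i} := by
  have := hX.isProbabilityMeasure
  have hprod : 0 < ∏ i, a i := Finset.prod_pos fun i _ ↦ ha i
  have hvar : variance (fun ω ↦ ∏ i, X i ω) P / (ε * ∏ i, a i) ^ 2 ≤
      (c ^ Fintype.card ι - 1) / ε ^ 2 := by
    rw [mul_pow, div_le_div_iff₀ (by positivity) (by positivity)]
    have := mul_le_mul_of_nonneg_right (hX.variance_fun_prod_le mX hX2 hmean hsecond)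
      (sq_nonneg ε)
    linarith
  calc ENNReal.ofReal (1 - (c ^ Fintype.card ι - 1) / ε ^ 2)
      ≤ ENNReal.ofReal (1 - variance (fun ω ↦ ∏ i, X i ω) P / (ε * ∏ i, a i) ^ 2) := by
        gcongr
    _ ≤ P {ω | |∏ i, X i ω - ∏ i, a i| < ε * ∏ i, a i} := by
        simpa only [hX.integral_fun_prod_of_integral_eq mX hmean] using
          ofReal_one_sub_variance_div_sq_le_meas_lt (hX.memLp_fun_prod mX hX2) (by positivity)

end Product

section SampleMean

variable {n : ℕ} {X : Fin n → Ω → ℝ} {a : ℝ}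

lemma integral_sampleMean (hn : n ≠ 0) (hint : ∀ j, Integrable (X j) P)
    (hmean : ∀ j, ∫ ω, X j ω ∂P = a) :
    ∫ ω, (1 / (n : ℝ)) * ∑ j, X j ω ∂P = a := by
  rw [integral_const_mul, integral_finsetSum _ fun j _ ↦ hint j]
  simp only [hmean, Finset.sum_const, Finset.card_univ, Fintype.card_fin, nsmul_eq_mul]
  field_simp

lemma variance_sampleMean_le (hX : ∀ j, MemLp (X j) 2 P)
    (hindep : Pairwise fun j k ↦ IndepFun (X j) (X k) P) {v : ℝ}
    (hvar : ∀ j, variance (X j) P ≤ v) :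
    variance (fun ω ↦ (1 / (n : ℝ)) * ∑ j, X j ω) P ≤ v / n := by
  have hsum : variance (∑ j, X j) P = ∑ j, variance (X j) P :=
    IndepFun.variance_sum (fun j _ ↦ hX j) fun j _ k _ hjk ↦ hindep hjk
  have hbound : ∑ j, variance (X j) P ≤ n * v := by
    simpa using Finset.sum_le_sum fun j (_ : j ∈ Finset.univ) ↦ hvar j
  have hfun : (fun ω ↦ (1 / (n : ℝ)) * ∑ j, X j ω) = (1 / (n : ℝ)) • ∑ j, X j := by
    ext ω; simp [Finset.sum_apply]
  rw [hfun, variance_smul, hsum]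
  rcases n.eq_zero_or_pos with rfl | hn
  · simp
  calc (1 / (n : ℝ)) ^ 2 * ∑ j, variance (X j) P ≤ (1 / (n : ℝ)) ^ 2 * (n * v) := by gcongr
    _ = v / n := by field_simp

lemma integral_sq_sampleMean_le [IsProbabilityMeasure P] (hn : n ≠ 0)
    (hX : ∀ j, MemLp (X j) 2 P)
    (hindep : Pairwise fun j k ↦ IndepFun (X j) (X k) P) (hmean : ∀ j, ∫ ω, X j ω ∂P = a)
    {B : ℝ} (hsecond : ∀ j, ∫ ω, X j ω ^ 2 ∂P ≤ B * a ^ 2) :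
    ∫ ω, ((1 / (n : ℝ)) * ∑ j, X j ω) ^ 2 ∂P ≤ (1 + (B - 1) / n) * a ^ 2 := by
  have hvar : ∀ j, variance (X j) P ≤ (B - 1) * a ^ 2 := fun j ↦ by
    rw [variance_eq_sub (hX j)]
    simp only [Pi.pow_apply, hmean j]
    linarith [hsecond j]
  have hmemLp : MemLp (fun ω ↦ (1 / (n : ℝ)) * ∑ j, X j ω) 2 P :=
    (memLp_finsetSum _ fun j _ ↦ hX j).const_mul _
  have := variance_sampleMean_le hX hindep hvar
  rw [variance_eq_sub hmemLp] at this
  simp only [Pi.pow_apply, integral_sampleMean hn (fun j ↦ (hX j).integrable one_le_two) hmean]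
    at this
  linarith [show (B - 1) * a ^ 2 / n = (B - 1) / n * a ^ 2 by ring]

end SampleMean

end ProbabilityTheory

lemma one_add_div_ceil_pow_le {B ε : ℝ} (hB : 1 ≤ B) (hε0 : 0 < ε) (hε1 : ε ≤ 1) (l : ℕ) :
    (1 + (B - 1) / ⌈16 * B * l / ε ^ 2⌉₊) ^ l ≤ 1 + ε ^ 2 / 8 := by
  set m := ⌈16 * B * l / ε ^ 2⌉₊
  have hmε : 16 * B * l ≤ ε ^ 2 * m :=
    (div_le_iff₀' (by positivity)).1 (Nat.le_ceil (16 * B * l / ε ^ 2))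
  have hsmall : l * ((B - 1) / m) ≤ ε ^ 2 / 16 := by
    rw [mul_div_assoc']
    refine div_le_of_le_mul₀ m.cast_nonneg (by positivity) ?_
    nlinarith [l.cast_nonneg (α := ℝ)]
  have := one_add_pow_le_one_add_two_mul (div_nonneg (by linarith) m.cast_nonneg)
    (hsmall.trans (by nlinarith))
  linarith

theorem dyer_frieze_product_estimator_general {Ω : Type*} [MeasureSpace Ω]
    [IsProbabilityMeasure (ℙ : Measure Ω)]
    (B : ℝ) (hB : 1 ≤ B) (l : ℕ) (ε : ℝ) (hε0 : 0 < ε) (hε1 : ε ≤ 1)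
    (m : ℕ) (hm : m = ⌈16 * B * l / ε ^ 2⌉₊)
    (Y : Fin l × Fin m → Ω → ℝ)
    (hYmeas : ∀ p, Measurable (Y p))
    (hindep : iIndepFun Y ℙ)
    (hY2 : ∀ p, MemLp (Y p) 2 ℙ)
    (μ : Fin l → ℝ) (hμpos : ∀ i, 0 < μ i)
    (hmean : ∀ i j, ∫ ω, Y (i, j) ω = μ i)
    (hsecond : ∀ i j, ∫ ω, (Y (i, j) ω) ^ 2 ≤ B * μ i ^ 2) :
    ENNReal.ofReal (3 / 4) ≤
      (ℙ : Measure Ω) {ω |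
        (1 - ε) * ∏ i, μ i ≤ ∏ i, ((1 / (m : ℝ)) * ∑ j, Y (i, j) ω) ∧
        ∏ i, ((1 / (m : ℝ)) * ∑ j, Y (i, j) ω) ≤ (1 + ε) * ∏ i, μ i} := by
  set S : Fin l → Ω → ℝ := fun i ω ↦ (1 / (m : ℝ)) * ∑ j, Y (i, j) ω
  have hm0 (i : Fin l) : m ≠ 0 := by
    have := i.pos
    exact hm ▸ (Nat.ceil_pos.2 (by positivity)).ne'
  have mS (i : Fin l) : Measurable (S i) := by fun_prop
  have hS : iIndepFun S ℙ := (hindep.curry hYmeas).comp (fun _ v ↦ (1 / (m : ℝ)) * ∑ j, v j)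
    fun _ ↦ by fun_prop
  have hS2 (i : Fin l) : MemLp (S i) 2 ℙ := (memLp_finsetSum _ fun j _ ↦ hY2 (i, j)).const_mul _
  have hmeanS (i : Fin l) : ∫ ω, S i ω = μ i :=
    integral_sampleMean (hm0 i) (fun j ↦ (hY2 _).integrable one_le_two) (hmean i)
  have hsecondS (i : Fin l) : ∫ ω, S i ω ^ 2 ≤ (1 + (B - 1) / m) * μ i ^ 2 :=
    integral_sq_sampleMean_le (hm0 i) (fun j ↦ hY2 _)
      (fun j k hjk ↦ hindep.indepFun (by simpa using hjk)) (hmean i) (hsecond i)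
  refine le_trans ?_ ((hS.ofReal_one_sub_le_meas_abs_fun_prod_sub_lt mS hS2 hμpos hmeanS
    hsecondS hε0).trans (measure_mono fun ω hω ↦ ?_))
  · have hpow := hm ▸ one_add_div_ceil_pow_le hB hε0 hε1 l
    rw [Fintype.card_fin]
    refine ENNReal.ofReal_le_ofReal ?_
    rw [le_sub_comm, div_le_iff₀ (by positivity)]
    linarith [sq_nonneg ε]
  · rw [Set.mem_ofPred_eq, abs_sub_lt_iff] at hω
    constructor <;> linarith

theorem dyer_frieze_product_estimator {Ω : Type*} [MeasureSpace Ω]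
    [IsProbabilityMeasure (ℙ : Measure Ω)]
    (B : ℝ) (hB : 1 ≤ B) (l : ℕ) (hl : 1 ≤ l) (ε : ℝ) (hε0 : 0 < ε) (hε1 : ε ≤ 1)
    (m : ℕ) (hm : m = ⌈16 * B * l / ε ^ 2⌉₊)
    (Y : Fin l × Fin m → Ω → ℝ)
    (hYmeas : ∀ p, Measurable (Y p))
    (hindep : iIndepFun Y ℙ)
    (hYnn : ∀ p ω, 0 ≤ Y p ω)
    (hY2 : ∀ p, MemLp (Y p) 2 ℙ)
    (μ : Fin l → ℝ) (hμpos : ∀ i, 0 < μ i)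
    (hmean : ∀ i j, ∫ ω, Y (i, j) ω = μ i)
    (hsecond : ∀ i j, ∫ ω, (Y (i, j) ω) ^ 2 ≤ B * μ i ^ 2) :
    ENNReal.ofReal (3 / 4) ≤
      (ℙ : Measure Ω) {ω |
        (1 - ε) * ∏ i, μ i ≤ ∏ i, ((1 / (m : ℝ)) * ∑ j, Y (i, j) ω) ∧
        ∏ i, ((1 / (m : ℝ)) * ∑ j, Y (i, j) ω) ≤ (1 + ε) * ∏ i, μ i} :=
  dyer_frieze_product_estimator_general B hB l ε hε0 hε1 m hm Y hYmeas hindep hY2 μ hμpos hmean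
    hsecond
end

section
/- For every integer t ≥ 1 and every real Δ with 0 < Δ < 1, it holds that 1 − sin²(π t Δ)/(t²·sin²(π Δ)) ≤ (π t Δ)²/3. -/
/-!
Write `a = t θ` with `θ = π Δ`. Since `|sin θ| ≤ |θ|`, the denominator `t² sin² θ` is at most `a²`,
so it suffices to show `a² (1 - a²/3) ≤ sin² a`. This is trivial when `a² ≥ 3`; otherwise
`|sin a| ≥ |a| - |a|³/6 ≥ 0`, and squaring gives `sin² a ≥ a² (1 - a²/6)² ≥ a² (1 - a²/3)`.
-/

open Real

theorem sq_mul_one_sub_sq_div_three_le_sin_sq (x : ℝ) : x ^ 2 * (1 - x ^ 2 / 3) ≤ sin x ^ 2 := by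
  rcases le_or_gt 3 (x ^ 2) with hx | hx
  · nlinarith [sq_nonneg (sin x)]
  · have habs : |x| ^ 2 = x ^ 2 := sq_abs x
    have hsin : |x| - |x| ^ 3 / 6 ≤ |sin x| := by
      linarith [abs_sub_sin_le x, abs_sub_abs_le_abs_sub x (sin x)]
    have hpos : 0 ≤ |x| - |x| ^ 3 / 6 := by nlinarith [abs_nonneg x]
    calc x ^ 2 * (1 - x ^ 2 / 3) ≤ x ^ 2 * (1 - x ^ 2 / 6) ^ 2 := by nlinarith [sq_nonneg (x ^ 3)]
      _ = (|x| - |x| ^ 3 / 6) ^ 2 := by rw [← habs]; ring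
      _ ≤ |sin x| ^ 2 := pow_le_pow_left₀ hpos hsin 2
      _ = sin x ^ 2 := sq_abs _

theorem one_sub_sin_mul_sq_div_le {t θ : ℝ} (ht : t ≠ 0) (hθ : sin θ ≠ 0) :
    1 - sin (t * θ) ^ 2 / (t ^ 2 * sin θ ^ 2) ≤ (t * θ) ^ 2 / 3 := by
  set a := t * θ
  have hden_pos : 0 < t ^ 2 * sin θ ^ 2 := by positivity
  have hden_le : t ^ 2 * sin θ ^ 2 ≤ a ^ 2 := by
    rw [mul_pow]
    exact mul_le_mul_of_nonneg_left sin_sq_le_sq (sq_nonneg t)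
  have ha : 0 < a ^ 2 := hden_pos.trans_le hden_le
  have hsmall : 1 - a ^ 2 / 3 ≤ sin a ^ 2 / a ^ 2 :=
    (le_div_iff₀ ha).2 (by linarith [sq_mul_one_sub_sq_div_three_le_sin_sq a])
  have hratio : sin a ^ 2 / a ^ 2 ≤ sin a ^ 2 / (t ^ 2 * sin θ ^ 2) :=
    div_le_div_of_nonneg_left (sq_nonneg _) hden_pos hden_le
  linarith

theorem dirichlet_kernel_bound (t : ℕ) (ht : 1 ≤ t) (Δ : ℝ) (hΔ0 : 0 < Δ) (hΔ1 : Δ < 1) :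
    1 - Real.sin (Real.pi * t * Δ) ^ 2 / ((t : ℝ) ^ 2 * Real.sin (Real.pi * Δ) ^ 2) ≤
      (Real.pi * t * Δ) ^ 2 / 3 := by
  have ht0 : (t : ℝ) ≠ 0 := Nat.cast_ne_zero.2 (by omega)
  have hsin : sin (π * Δ) ≠ 0 :=
    (sin_pos_of_pos_of_lt_pi (mul_pos pi_pos hΔ0) (by nlinarith [pi_pos])).ne'
  rw [show π * t * Δ = t * (π * Δ) by ring]
  exact one_sub_sin_mul_sq_div_le ht0 hsin
end
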